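/- arXiv:1008.1051 — 2 statements merged into one kernel-verified Lean document; each statement's English description precedes it below -/
import Mathlib

section
/- Let P, W ⊆ ℝ² be finite and let a, b, c ∈ P be pairwise distinct points such that ab and bc are edges of the witness Gabriel graph GG⁻(P,W), i.e., (D(a,b) \ {a,b}) ∩ W = ∅ and (D(b,c) \ {b,c}) ∩ W = ∅. Then (i) every point p ∈ P with p ≠ b lying in the triangle convexHull{a,b,c} is adjacent to b in GG⁻(P,W), and (ii) W ∩ convexHull{a,b,c} ⊆ {a,b,c}. -/
open scoped RealInnerProductSpace

noncomputable section

/-- The Euclidean plane. -/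
abbrev Pt := EuclideanSpace ℝ (Fin 2)

/-- The closed disk with diameter `ab`. -/
def diskD (a b : Pt) : Set Pt := Metric.closedBall (midpoint ℝ a b) (dist a b / 2)

/-- `a` and `b` are adjacent in the witness Gabriel graph with witness set `W`. -/
def gabrielEdge (W : Set Pt) (a b : Pt) : Prop := (diskD a b \ {a, b}) ∩ W = ∅

/-- General position: no three points collinear, no four points concyclic. -/
def GenPos (S : Set Pt) : Prop :=
  (∀ a ∈ S, ∀ b ∈ S, ∀ c ∈ S, a ≠ b → a ≠ c → b ≠ c → ¬ Collinear ℝ ({a, b, c} : Set Pt)) ∧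
  (∀ a ∈ S, ∀ b ∈ S, ∀ c ∈ S, ∀ d ∈ S, a ≠ b → a ≠ c → a ≠ d → b ≠ c → b ≠ d → c ≠ d →
    ¬ EuclideanGeometry.Cospherical ({a, b, c, d} : Set Pt))

/-- Planar determinant `u₁v₂ − u₂v₁`. -/
def det2 (u v : Pt) : ℝ := u 0 * v 1 - u 1 * v 0

/-- Counterclockwise convex position. -/
def CCWConvexPos {m : ℕ} (q : Fin m → Pt) : Prop :=
  ∀ i j k : Fin m, i < j → j < k → 0 < det2 (q j - q i) (q k - q i)

/-- Cyclic successor in `Fin m`. -/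
def cyclicSucc {m : ℕ} (hm : 0 < m) (i : Fin m) : Fin m :=
  ⟨((i : ℕ) + 1) % m, Nat.mod_lt _ hm⟩

/-!
Thales: `x ∈ D(a, b)` iff `⟪x - a, x - b⟫ ≤ 0`, and for fixed `x` the left side is affine in `a`.
So if `x` lies outside `D(a, b) ∪ D(b, c)`, the map `q ↦ ⟪x - q, x - b⟫` is positive at all three
vertices, hence on the whole triangle: `D(p, b) ⊆ D(a, b) ∪ D(b, c)` for every `p` in it, and a
witness in `D(p, b)` must be `a`, `b` or `c`. Taking `p = w` gives (ii). For (i), a witness at the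
vertex `a` lies outside `D(b, c)`, so `q ↦ ⟪a - q, a - b⟫` vanishes at `a` and is positive at `b`
and `c`; it is then positive on the triangle except at `a`, so `a ∈ D(p, b)` forces `p = a`.
-/

section InnerProductSpace

variable {E : Type*} [NormedAddCommGroup E] [InnerProductSpace ℝ E]

lemma inner_sub_sub_eq_dist_midpoint_sq_sub (x a b : E) :
    ⟪x - a, x - b⟫ = dist x (midpoint ℝ a b) ^ 2 - (dist a b / 2) ^ 2 := by
  have hm : x - midpoint ℝ a b = (2 : ℝ)⁻¹ • ((x - a) + (x - b)) := by
    rw [midpoint_eq_smul_add, invOf_eq_inv]; module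
  have hab : a - b = (x - b) - (x - a) := by abel
  rw [dist_eq_norm, dist_eq_norm, hm, hab]
  generalize x - a = u, x - b = v
  rw [norm_smul, div_pow, mul_pow, norm_add_sq_real, norm_sub_sq_real, real_inner_comm v]
  norm_num
  ring

lemma inner_sub_smul_add_smul {x y z v : E} {s t : ℝ} (hst : s + t = 1) :
    ⟪x - (s • y + t • z), v⟫ = s * ⟪x - y, v⟫ + t * ⟪x - z, v⟫ := by
  have hcomb : x - (s • y + t • z) = s • (x - y) + t • (x - z) := by
    have hx : x = s • x + t • x := by rw [← add_smul, hst, one_smul]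
    nth_rewrite 1 [hx]
    module
  rw [hcomb, inner_add_left, real_inner_smul_left, real_inner_smul_left]

lemma eq_of_mem_convexHull_of_inner_nonpos {a b c p x v : E}
    (hp : p ∈ convexHull ℝ ({a, b, c} : Set E)) (ha : 0 ≤ ⟪x - a, v⟫) (hb : 0 < ⟪x - b, v⟫)
    (hc : 0 < ⟪x - c, v⟫) (hpv : ⟪x - p, v⟫ ≤ 0) : p = a := by
  rw [convexHull_insert (Set.insert_nonempty b {c}), convexHull_pair, mem_convexJoin] at hp
  obtain ⟨a', rfl, z, ⟨s', t', hs', ht', hst', rfl⟩, s, t, hs, ht, hst, rfl⟩ := hp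
  have hz : 0 < ⟪x - (s' • b + t' • c), v⟫ := by
    rw [inner_sub_smul_add_smul hst']
    rcases hs'.eq_or_lt with rfl | hs'
    · obtain rfl : t' = 1 := by linarith
      simpa using hc
    · nlinarith [mul_pos hs' hb, mul_nonneg ht' hc.le]
  rw [inner_sub_smul_add_smul hst] at hpv
  obtain rfl : t = 0 := by nlinarith
  obtain rfl : s = 1 := by linarith
  simp

end InnerProductSpace

lemma mem_diskD_iff {x a b : Pt} : x ∈ diskD a b ↔ ⟪x - a, x - b⟫ ≤ 0 := by
  rw [diskD, Metric.mem_closedBall, inner_sub_sub_eq_dist_midpoint_sq_sub, sub_nonpos,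
    sq_le_sq₀ dist_nonneg (by positivity)]

lemma left_mem_diskD (a b : Pt) : a ∈ diskD a b := by
  simp [mem_diskD_iff]

lemma diskD_comm (a b : Pt) : diskD a b = diskD b a := by
  ext x
  rw [mem_diskD_iff, mem_diskD_iff, real_inner_comm]

lemma gabrielEdge_iff {W : Set Pt} {a b : Pt} :
    gabrielEdge W a b ↔ ∀ w ∈ W, w ∈ diskD a b → w = a ∨ w = b := by
  simp only [gabrielEdge, Set.eq_empty_iff_forall_notMem, Set.mem_inter_iff, Set.mem_sdiff,
    Set.mem_insert_iff, Set.mem_singleton_iff]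
  grind

lemma gabrielEdge_comm {W : Set Pt} {a b : Pt} : gabrielEdge W a b ↔ gabrielEdge W b a := by
  rw [gabrielEdge, gabrielEdge, diskD_comm, Set.pair_comm]

lemma diskD_subset_union_of_mem_convexHull {a b c p : Pt}
    (hp : p ∈ convexHull ℝ ({a, b, c} : Set Pt)) : diskD p b ⊆ diskD a b ∪ diskD b c := by
  intro x hx
  by_contra! h
  rw [Set.mem_union, not_or, mem_diskD_iff, mem_diskD_iff, not_le, not_le] at h
  obtain ⟨hxa, hxc⟩ := h
  have hxb : x ≠ b := by
    rintro rfl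
    simp at hxa
  rw [mem_diskD_iff] at hx
  obtain rfl : p = a := eq_of_mem_convexHull_of_inner_nonpos hp hxa.le
    (real_inner_self_pos.2 (sub_ne_zero.2 hxb)) (by rwa [real_inner_comm]) hx
  exact hxa.not_ge hx

lemma mem_triple_of_mem_diskD_of_mem_convexHull {W : Set Pt} {a b c p w : Pt}
    (eab : gabrielEdge W a b) (ebc : gabrielEdge W b c)
    (hp : p ∈ convexHull ℝ ({a, b, c} : Set Pt)) (hwW : w ∈ W) (hw : w ∈ diskD p b) :
    w = a ∨ w = b ∨ w = c := by
  rcases diskD_subset_union_of_mem_convexHull hp hw with hw | hw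
  · rcases gabrielEdge_iff.1 eab w hwW hw with rfl | rfl <;> simp
  · rcases gabrielEdge_iff.1 ebc w hwW hw with rfl | rfl <;> simp

lemma eq_of_witness_mem_diskD_of_mem_convexHull {W : Set Pt} {a b c p : Pt}
    (ebc : gabrielEdge W b c) (hp : p ∈ convexHull ℝ ({a, b, c} : Set Pt))
    (hab : a ≠ b) (hac : a ≠ c) (haW : a ∈ W) (ha : a ∈ diskD p b) : p = a := by
  have hca : 0 < ⟪a - c, a - b⟫ := by
    by_contra! h
    have hbc : a ∈ diskD b c := mem_diskD_iff.2 (by rwa [real_inner_comm])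
    rcases gabrielEdge_iff.1 ebc a haW hbc with h | h
    exacts [hab h, hac h]
  exact eq_of_mem_convexHull_of_inner_nonpos hp (by simp)
    (real_inner_self_pos.2 (sub_ne_zero.2 hab)) hca (mem_diskD_iff.1 ha)

theorem incident_edges_triangle_property_general
    (P W : Finset Pt) (a b c : Pt)
    (hab : a ≠ b) (hbc : b ≠ c) (hac : a ≠ c)
    (eab : gabrielEdge (W : Set Pt) a b) (ebc : gabrielEdge (W : Set Pt) b c) :
    (∀ p ∈ P, p ≠ b → p ∈ convexHull ℝ ({a, b, c} : Set Pt) →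
      gabrielEdge (W : Set Pt) p b) ∧
    ((W : Set Pt) ∩ convexHull ℝ ({a, b, c} : Set Pt) ⊆ {a, b, c}) := by
  have triple_comm : ({a, b, c} : Set Pt) = {c, b, a} := by
    ext
    simp only [Set.mem_insert_iff, Set.mem_singleton_iff]
    tauto
  refine ⟨fun p _ _ hp => gabrielEdge_iff.2 fun w hwW hw => ?_, fun w ⟨hwW, hw⟩ => ?_⟩
  · rcases mem_triple_of_mem_diskD_of_mem_convexHull eab ebc hp hwW hw with rfl | rfl | rfl
    · exact Or.inl (eq_of_witness_mem_diskD_of_mem_convexHull ebc hp hab hac hwW hw).symm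
    · exact Or.inr rfl
    · rw [triple_comm] at hp
      exact Or.inl (eq_of_witness_mem_diskD_of_mem_convexHull (gabrielEdge_comm.1 eab) hp
        hbc.symm hac.symm hwW hw).symm
  · exact mem_triple_of_mem_diskD_of_mem_convexHull eab ebc hw hwW (left_mem_diskD w b)

/-- For incident edges `ab`, `bc`, every vertex in triangle `abc` is adjacent
to `b`, and the triangle contains no witness other than possibly `a,b,c`. -/
theorem incident_edges_triangle_property
    (P W : Finset Pt) (a b c : Pt) (ha : a ∈ P) (hb : b ∈ P) (hc : c ∈ P)
    (hab : a ≠ b) (hbc : b ≠ c) (hac : a ≠ c)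
    (eab : gabrielEdge (W : Set Pt) a b) (ebc : gabrielEdge (W : Set Pt) b c) :
    (∀ p ∈ P, p ≠ b → p ∈ convexHull ℝ ({a, b, c} : Set Pt) →
      gabrielEdge (W : Set Pt) p b) ∧
    ((W : Set Pt) ∩ convexHull ℝ ({a, b, c} : Set Pt) ⊆ {a, b, c}) :=
  incident_edges_triangle_property_general P W a b c hab hbc hac eab ebc
end
end

section
/- For all points a, b, c ∈ ℝ², the closed triangle convexHull{a, b, c} is contained in the union D(a,b) ∪ D(b,c) of the two diametral disks on the sides ab and bc. -/
open scoped RealInnerProductSpace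

noncomputable section

/-!
A point `x` lies in the disk with diameter `ab` iff `⟪x - a, x - b⟫ ≤ 0` (Thales). Every point of
the triangle lies on a segment from `b` to some `z ∈ [a, c]`, and both disks are convex and contain
`b`, so it suffices to cover `[a, c]`. Writing `z = a + s (c - a)` with `s ∈ [0, 1]`, the two inner
products `⟪z - a, z - b⟫ = s t` and `⟪z - b, z - c⟫ = (s - 1) t` share the factor
`t = ⟪c - a, z - b⟫`, so one of them is `≤ 0` whatever the sign of `t`.
-/

section InnerProductSpace

variable {E : Type*} [NormedAddCommGroup E] [InnerProductSpace ℝ E]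

theorem dist_midpoint_sq_sub_sq_half_dist (a b x : E) :
    dist x (midpoint ℝ a b) ^ 2 - (dist a b / 2) ^ 2 = ⟪x - a, x - b⟫ := by
  have hmid : x - midpoint ℝ a b = (2⁻¹ : ℝ) • ((x - a) + (x - b)) := by
    rw [midpoint_eq_smul_add, invOf_eq_inv]
    module
  have hdiff : a - b = (x - b) - (x - a) := by abel
  rw [dist_eq_norm, dist_eq_norm, hmid, hdiff, norm_smul, Real.norm_of_nonneg (by norm_num),
    mul_pow, div_pow, norm_add_sq_real (x - a), norm_sub_sq_real (x - b), real_inner_comm (x - b)]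
  ring

theorem mem_closedBall_midpoint_iff_inner_nonpos {a b x : E} :
    x ∈ Metric.closedBall (midpoint ℝ a b) (dist a b / 2) ↔ ⟪x - a, x - b⟫ ≤ 0 := by
  rw [Metric.mem_closedBall, ← dist_midpoint_sq_sub_sq_half_dist, sub_nonpos,
    sq_le_sq₀ dist_nonneg (by positivity)]

theorem segment_subset_closedBall_midpoint_union (a b c : E) :
    segment ℝ a c ⊆ Metric.closedBall (midpoint ℝ a b) (dist a b / 2) ∪
      Metric.closedBall (midpoint ℝ b c) (dist b c / 2) := by
  rw [segment_eq_image']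
  rintro _ ⟨s, ⟨hs0, hs1⟩, rfl⟩
  set z := a + s • (c - a)
  change z ∈ _
  have hza : ⟪z - a, z - b⟫ = s * ⟪c - a, z - b⟫ := by
    rw [show z - a = s • (c - a) by simp [z], real_inner_smul_left]
  have hzc : ⟪z - b, z - c⟫ = (s - 1) * ⟪c - a, z - b⟫ := by
    rw [real_inner_comm, show z - c = (s - 1) • (c - a) by simp only [z]; module,
      real_inner_smul_left]
  rw [Set.mem_union, mem_closedBall_midpoint_iff_inner_nonpos,
    mem_closedBall_midpoint_iff_inner_nonpos, hza, hzc]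
  rcases le_total ⟪c - a, z - b⟫ 0 with ht | ht
  · exact .inl (mul_nonpos_of_nonneg_of_nonpos hs0 ht)
  · exact .inr (mul_nonpos_of_nonpos_of_nonneg (by linarith) ht)

theorem convexHull_triple_subset_closedBall_midpoint_union (a b c : E) :
    convexHull ℝ ({a, b, c} : Set E) ⊆ Metric.closedBall (midpoint ℝ a b) (dist a b / 2) ∪
      Metric.closedBall (midpoint ℝ b c) (dist b c / 2) := by
  rw [Set.insert_comm, convexHull_insert (Set.insert_nonempty _ _), convexHull_pair]
  intro x hx
  obtain ⟨_, hb, z, hz, hxz⟩ := mem_convexJoin.1 hx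
  rw [Set.mem_singleton_iff.1 hb] at hxz
  have hb_ab : b ∈ Metric.closedBall (midpoint ℝ a b) (dist a b / 2) :=
    mem_closedBall_midpoint_iff_inner_nonpos.2 (by simp)
  have hb_bc : b ∈ Metric.closedBall (midpoint ℝ b c) (dist b c / 2) :=
    mem_closedBall_midpoint_iff_inner_nonpos.2 (by simp)
  rcases segment_subset_closedBall_midpoint_union a b c hz with hz | hz
  · exact .inl ((convex_closedBall _ _).segment_subset hb_ab hz hxz)
  · exact .inr ((convex_closedBall _ _).segment_subset hb_bc hz hxz)

end InnerProductSpace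

/-- The triangle `abc` is covered by the diametral disks on `ab` and `bc`. -/
theorem triangle_subset_two_disks (a b c : Pt) :
    convexHull ℝ ({a, b, c} : Set Pt) ⊆ diskD a b ∪ diskD b c :=
  convexHull_triple_subset_closedBall_midpoint_union a b c
end
end
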